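/- The matrix X̄ = [[1,0],[0,0]] is the unique minimizer of the nuclear norm ‖X‖_* over all 2×2 real matrices X satisfying X₁₁ + X₂₂ = 1 and X₁₂ − X₂₁ + X₂₂ = 0, but X̄ is not a strong minimizer: there is no κ > 0 and δ > 0 with ‖X‖_* − ‖X̄‖_* ≥ (κ/2)‖X − X̄‖_F² for all feasible X with ‖X − X̄‖_F ≤ δ. -/
import Mathlib

/-- Squared Frobenius norm of a 2×2 real matrix. -/
noncomputable def frobSq (X : Matrix (Fin 2) (Fin 2) ℝ) : ℝ :=
  ∑ i, ∑ j, (X i j) ^ 2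

/-- Nuclear norm of a 2×2 real matrix: `‖X‖_* = √(‖X‖_F² + 2|det X|)`. -/
noncomputable def nuclearNorm (X : Matrix (Fin 2) (Fin 2) ℝ) : ℝ :=
  Real.sqrt (frobSq X + 2 * |X.det|)

/-- Feasibility: `X₁₁ + X₂₂ = 1` and `X₁₂ − X₂₁ + X₂₂ = 0`. -/
def feasible (X : Matrix (Fin 2) (Fin 2) ℝ) : Prop :=
  X 0 0 + X 1 1 = 1 ∧ X 0 1 - X 1 0 + X 1 1 = 0

lemma frobSq_eq (X : Matrix (Fin 2) (Fin 2) ℝ) :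
    frobSq X = (X 0 0)^2 + (X 0 1)^2 + (X 1 0)^2 + (X 1 1)^2 := by
  simp [frobSq, Fin.sum_univ_two]; ring

lemma nuclearNorm_bar : nuclearNorm (!![1, 0; 0, 0] : Matrix (Fin 2) (Fin 2) ℝ) = 1 := by
  simp [nuclearNorm, frobSq_eq, Matrix.det_fin_two]

lemma one_le_nuclearNorm {X : Matrix (Fin 2) (Fin 2) ℝ} (h : feasible X) :
    1 ≤ nuclearNorm X := by
  obtain ⟨h1, h2⟩ := h
  have hS : 1 ≤ frobSq X + 2 * |X.det| := by
    rw [frobSq_eq, Matrix.det_fin_two]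
    set a := X 0 0; set b := X 0 1; set c := X 1 0; set d := X 1 1
    have e : a^2 + b^2 + c^2 + d^2 + 2*(a*d - b*c) = 1 + d^2 := by
      rw [show a = 1 - d from by linarith, show c = b + d from by linarith]; ring
    nlinarith [le_abs_self (a*d - b*c), sq_nonneg d]
  calc (1:ℝ) = Real.sqrt 1 := Real.sqrt_one.symm
    _ ≤ _ := Real.sqrt_le_sqrt hS

lemma eq_bar_of_nuclearNorm_le {X : Matrix (Fin 2) (Fin 2) ℝ} (h : feasible X)
    (hle : nuclearNorm X ≤ 1) : X = !![1, 0; 0, 0] := by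
  obtain ⟨h1, h2⟩ := h
  set a := X 0 0; set b := X 0 1; set c := X 1 0; set d := X 1 1
  have hdet : X.det = a * d - b * c := Matrix.det_fin_two X
  have hS0 : (0:ℝ) ≤ frobSq X + 2 * |X.det| := by
    rw [frobSq_eq, hdet]; positivity
  rw [nuclearNorm] at hle
  have hS1 : frobSq X + 2 * |X.det| ≤ 1 := by
    have := Real.sq_sqrt hS0
    nlinarith [Real.sqrt_nonneg (frobSq X + 2 * |X.det|)]
  rw [frobSq_eq, hdet] at hS1
  have e : a^2 + b^2 + c^2 + d^2 + 2*(a*d - b*c) = 1 + d^2 := by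
    rw [show a = 1 - d from by linarith, show c = b + d from by linarith]; ring
  have hd : d = 0 := by
    nlinarith [le_abs_self (a * d - b * c), sq_nonneg d]
  have hb : b = 0 := by
    have hcb : c = b := by linarith
    have hdet2 : a * d - b * c = -(b^2) := by rw [hcb, hd]; ring
    rw [hdet2, abs_neg, abs_of_nonneg (sq_nonneg b)] at hS1
    nlinarith [sq_nonneg b]
  have hc : c = 0 := by linarith
  have ha : a = 1 := by linarith
  ext i j
  fin_cases i <;> fin_cases j <;>
    simp only [Matrix.cons_val', Matrix.cons_val_zero, Matrix.cons_val_one, Matrix.head_cons,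
      Matrix.empty_val', Matrix.cons_val_fin_one, Matrix.head_fin_const] <;>
    first | exact ha | exact hb | exact hc | exact hd

/-- `X̄ = [[1,0],[0,0]]` is the unique minimizer of the nuclear norm over the
feasible set, but it is not a strong minimizer there. -/
theorem unique_not_strong_nuclear :
    feasible (!![1, 0; 0, 0] : Matrix (Fin 2) (Fin 2) ℝ) ∧
    (∀ X, feasible X → nuclearNorm (!![1, 0; 0, 0]) ≤ nuclearNorm X) ∧
    (∀ X, feasible X → X ≠ !![1, 0; 0, 0] →
      nuclearNorm (!![1, 0; 0, 0]) < nuclearNorm X) ∧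
    ¬ ∃ κ > (0 : ℝ), ∃ δ > (0 : ℝ), ∀ X, feasible X →
        Real.sqrt (frobSq (X - !![1, 0; 0, 0])) ≤ δ →
        nuclearNorm X - nuclearNorm (!![1, 0; 0, 0]) ≥
          κ / 2 * frobSq (X - !![1, 0; 0, 0]) := by
  refine ⟨⟨by norm_num, by norm_num⟩, ?_, ?_, ?_⟩
  · intro X hX
    rw [nuclearNorm_bar]
    exact one_le_nuclearNorm hX
  · intro X hX hne
    rw [nuclearNorm_bar]
    rcases lt_or_ge 1 (nuclearNorm X) with h | h
    · exact h
    · exact absurd (eq_bar_of_nuclearNorm_le hX h) hne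
  · rintro ⟨κ, hκ, δ, hδ, H⟩
    set s : ℝ := min 1 (min (Real.sqrt (δ / 2)) (Real.sqrt κ / 2)) with hs_def
    have hδ2 : (0:ℝ) ≤ δ / 2 := by linarith
    have hs0 : 0 < s := by
      apply lt_min (by norm_num)
      exact lt_min (Real.sqrt_pos.mpr (by linarith)) (by positivity)
    have hs1 : s ≤ 1 := min_le_left _ _
    have hsδ : s ^ 2 ≤ δ / 2 := by
      have h : s ≤ Real.sqrt (δ / 2) := le_trans (min_le_right _ _) (min_le_left _ _)
      nlinarith [Real.sq_sqrt hδ2, Real.sqrt_nonneg (δ / 2)]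
    have hsκ : s ^ 2 ≤ κ / 4 := by
      have h : s ≤ Real.sqrt κ / 2 := le_trans (min_le_right _ _) (min_le_right _ _)
      nlinarith [Real.sq_sqrt hκ.le, Real.sqrt_nonneg κ]
    set X : Matrix (Fin 2) (Fin 2) ℝ := !![1 - s^3, s^2 - s^3; s^2, s^3] with hX_def
    have hfeas : feasible X := by
      exact ⟨by simp [hX_def], by simp [hX_def]⟩
    have hF : frobSq (X - !![1, 0; 0, 0]) = s^6 + (s^2 - s^3)^2 + s^4 + s^6 := by
      rw [frobSq_eq]
      simp [hX_def, Matrix.sub_apply]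
      ring
    have hdet : X.det = s^3 * (1 - s) * (1 + s^2) := by
      rw [Matrix.det_fin_two]
      simp [hX_def]
      ring
    have hdet0 : 0 ≤ X.det := by
      rw [hdet]
      have h1s : (0:ℝ) ≤ 1 - s := by linarith
      have := mul_nonneg (mul_nonneg (by positivity : (0:ℝ) ≤ s^3) h1s)
        (by positivity : (0:ℝ) ≤ 1 + s^2)
      linarith
    have hnn : nuclearNorm X ≤ 1 + s^6 / 2 := by
      have hSval : frobSq X + 2 * |X.det| = 1 + s^6 := by
        rw [frobSq_eq, abs_of_nonneg hdet0, hdet]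
        simp [hX_def]
        ring
      rw [nuclearNorm, hSval]
      have : (1:ℝ) + s^6 ≤ (1 + s^6/2)^2 := by nlinarith [pow_pos hs0 6]
      calc Real.sqrt (1 + s^6) ≤ Real.sqrt ((1 + s^6/2)^2) := Real.sqrt_le_sqrt this
        _ = 1 + s^6/2 := Real.sqrt_sq (by positivity)
    have hFle : frobSq (X - !![1, 0; 0, 0]) ≤ (2 * s^2)^2 := by
      rw [hF]; nlinarith [pow_pos hs0 2, pow_pos hs0 4, pow_pos hs0 6, sq_nonneg (s^2 - s^3)]
    have hsqrtF : Real.sqrt (frobSq (X - !![1, 0; 0, 0])) ≤ δ := by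
      calc Real.sqrt (frobSq (X - !![1, 0; 0, 0])) ≤ Real.sqrt ((2 * s^2)^2) :=
            Real.sqrt_le_sqrt hFle
        _ = 2 * s^2 := Real.sqrt_sq (by positivity)
        _ ≤ δ := by linarith
    have hmain := H X hfeas hsqrtF
    rw [nuclearNorm_bar, hF] at hmain
    nlinarith [pow_pos hs0 4, pow_pos hs0 6, sq_nonneg (s^2 - s^3), pow_pos hs0 2]
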